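/- arXiv:math/0610546 — 3 statements merged into one kernel-verified Lean document; each statement's English description precedes it below -/
import Mathlib

section
/- For every natural number L, the sum over j from -L to 2L of (-1)^j * q^(j(3j+1)/2) * [2L-j choose L+j]_q equals 1, where [· choose ·]_q denotes the Gaussian (q-)binomial coefficient. -/
open Finset

/-- The indeterminate `q`, as an element of the field of rational functions over `ℚ`. -/
noncomputable def q : RatFunc ℚ := RatFunc.X

/-- The Gaussian (q-)binomial coefficient `[n choose k]_t` with base `t`,
defined as `(1-t^(n-k+1))⋯(1-t^n) / ((1-t)⋯(1-t^k))` for `0 ≤ k ≤ n` and `0` otherwise. -/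
noncomputable def qb (t : RatFunc ℚ) (n k : ℤ) : RatFunc ℚ :=
  if 0 ≤ k ∧ k ≤ n then
    (∏ i ∈ Finset.range k.toNat, (1 - t ^ (n - (i : ℤ)))) /
      (∏ i ∈ Finset.range k.toNat, (1 - t ^ ((i : ℤ) + 1)))
  else 0

lemma q_ne_zero : q ≠ 0 := RatFunc.X_ne_zero

lemma q_zpow_ne_one {m : ℤ} (hm : 0 < m) : q ^ m ≠ 1 := by
  intro h
  have h1 : q ^ m = q ^ (m.toNat : ℤ) := by rw [Int.toNat_of_nonneg hm.le]
  rw [h1, zpow_natCast] at h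
  have h2 : (RatFunc.X : RatFunc ℚ) ^ m.toNat = algebraMap (Polynomial ℚ) (RatFunc ℚ) (Polynomial.X ^ m.toNat) := by
    rw [map_pow, RatFunc.algebraMap_X]
  have h3 : (1 : RatFunc ℚ) = algebraMap (Polynomial ℚ) (RatFunc ℚ) 1 := by simp
  rw [show q = RatFunc.X from rfl, h2, h3] at h
  have h4 := RatFunc.algebraMap_injective ℚ h
  have h5 := congrArg Polynomial.natDegree h4
  simp [Polynomial.natDegree_X_pow] at h5
  omega

lemma one_sub_q_ne {m : ℤ} (hm : 0 < m) : (1 : RatFunc ℚ) - q ^ m ≠ 0 := by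
  intro h
  exact q_zpow_ne_one hm (by linear_combination -h)

noncomputable def Np (n : ℤ) (k : ℕ) : RatFunc ℚ := ∏ i ∈ Finset.range k, (1 - q ^ (n - (i : ℤ)))
noncomputable def Dp (k : ℕ) : RatFunc ℚ := ∏ i ∈ Finset.range k, (1 - q ^ ((i : ℤ) + 1))

lemma Dp_ne (k : ℕ) : Dp k ≠ 0 := by
  rw [Dp]
  apply Finset.prod_ne_zero_iff.mpr
  intro i _
  exact one_sub_q_ne (by positivity)

lemma qb_def {n k : ℤ} (h0 : 0 ≤ k) (h1 : k ≤ n) : qb q n k = Np n k.toNat / Dp k.toNat := by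
  rw [qb, if_pos ⟨h0, h1⟩]; rfl

lemma qb_zero {n k : ℤ} (h : ¬ (0 ≤ k ∧ k ≤ n)) : qb q n k = 0 := by
  rw [qb, if_neg h]

lemma Np_succ (n : ℤ) (k : ℕ) : Np n (k + 1) = Np n k * (1 - q ^ (n - (k : ℤ))) := by
  rw [Np, Finset.prod_range_succ]; rfl

lemma Np_shift (n : ℤ) (k : ℕ) : Np n (k + 1) = (1 - q ^ n) * Np (n - 1) k := by
  rw [Np, Finset.prod_range_succ']
  rw [mul_comm]
  congr 1
  · norm_num
  · apply Finset.prod_congr rfl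
    intro i _
    congr 1
    push_cast
    ring

lemma Dp_succ (k : ℕ) : Dp (k + 1) = Dp k * (1 - q ^ ((k : ℤ) + 1)) := by
  rw [Dp, Finset.prod_range_succ]; rfl

lemma Np_diag (n : ℕ) : Np (n : ℤ) n = Dp n := by
  rw [Np, Dp, ← Finset.prod_range_reflect (fun i => 1 - q ^ ((i : ℤ) + 1)) n]
  apply Finset.prod_congr rfl
  intro j hj
  rw [Finset.mem_range] at hj
  have h2 : ((n : ℤ) - (j : ℤ)) = ((n - 1 - j : ℕ) : ℤ) + 1 := by omega
  rw [h2]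

lemma qb_diag {n : ℤ} (h : 0 ≤ n) : qb q n n = 1 := by
  rw [qb_def h le_rfl]
  nth_rewrite 1 [show n = (n.toNat : ℤ) by omega]
  rw [Np_diag, div_self (Dp_ne _)]

lemma qb_zero_right {n : ℤ} (h : 0 ≤ n) : qb q n 0 = 1 := by
  rw [qb_def le_rfl h]
  simp [Np, Dp]
lemma pascal1 {n : ℤ} (k : ℤ) (hn : 1 ≤ n) :
    qb q n k = qb q (n - 1) k + q ^ (n - k) * qb q (n - 1) (k - 1) := by
  rcases lt_or_ge k 0 with hk | hk
  · rw [qb_zero (by omega), qb_zero (by omega), qb_zero (by omega)]; ring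
  rcases eq_or_lt_of_le hk with hk0 | hkpos
  · rw [← hk0, qb_zero_right (by omega), qb_zero_right (by omega), qb_zero (by omega)]; ring
  rcases lt_or_ge n k with hnk | hnk
  · rw [qb_zero (by omega), qb_zero (by omega), qb_zero (by omega)]; ring
  rcases eq_or_lt_of_le hnk with hke | hke
  · rw [hke, qb_diag (by omega), qb_zero (by omega), qb_diag (by omega)]
    simp
  -- interior case: 0 < k < n
  obtain ⟨b, hb⟩ : ∃ b : ℕ, k = (b : ℤ) + 1 := ⟨(k - 1).toNat, by omega⟩
  subst hb
  rw [qb_def (by omega) (by omega), qb_def (by omega) (by omega), qb_def (by omega) (by omega)]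
  rw [show ((b : ℤ) + 1).toNat = b + 1 by omega, show ((b : ℤ) + 1 - 1).toNat = b by omega]
  rw [Np_shift, Np_succ, Dp_succ]
  have h2 : q ^ (n - 1 - (b : ℤ)) * q ^ ((b : ℤ) + 1) = q ^ n := by
    rw [← zpow_add₀ q_ne_zero]
    congr 1
    ring
  have key : (1 : RatFunc ℚ) - q ^ n
      = (1 - q ^ (n - 1 - (b : ℤ))) + q ^ (n - 1 - (b : ℤ)) * (1 - q ^ ((b : ℤ) + 1)) := by
    linear_combination h2
  rw [key, show n - ((b : ℤ) + 1) = n - 1 - (b : ℤ) by ring]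
  have hc := one_sub_q_ne (show (0 : ℤ) < (b : ℤ) + 1 by positivity)
  field_simp [Dp_ne b, hc]

lemma pascal2 {n : ℤ} (k : ℤ) (hn : 1 ≤ n) :
    qb q n k = q ^ k * qb q (n - 1) k + qb q (n - 1) (k - 1) := by
  rcases lt_or_ge k 0 with hk | hk
  · rw [qb_zero (by omega), qb_zero (by omega), qb_zero (by omega)]; ring
  rcases eq_or_lt_of_le hk with hk0 | hkpos
  · rw [← hk0, qb_zero_right (by omega), qb_zero_right (by omega), qb_zero (by omega)]
    simp
  rcases lt_or_ge n k with hnk | hnk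
  · rw [qb_zero (by omega), qb_zero (by omega), qb_zero (by omega)]; ring
  rcases eq_or_lt_of_le hnk with hke | hke
  · rw [hke, qb_diag (by omega), qb_zero (by omega), qb_diag (by omega)]; ring
  obtain ⟨b, hb⟩ : ∃ b : ℕ, k = (b : ℤ) + 1 := ⟨(k - 1).toNat, by omega⟩
  subst hb
  rw [qb_def (by omega) (by omega), qb_def (by omega) (by omega), qb_def (by omega) (by omega)]
  rw [show ((b : ℤ) + 1).toNat = b + 1 by omega, show ((b : ℤ) + 1 - 1).toNat = b by omega]
  rw [Np_shift, Np_succ, Dp_succ]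
  have h2 : q ^ ((b : ℤ) + 1) * q ^ (n - 1 - (b : ℤ)) = q ^ n := by
    rw [← zpow_add₀ q_ne_zero]
    congr 1
    ring
  have key : (1 : RatFunc ℚ) - q ^ n
      = q ^ ((b : ℤ) + 1) * (1 - q ^ (n - 1 - (b : ℤ))) + (1 - q ^ ((b : ℤ) + 1)) := by
    linear_combination h2
  rw [key]
  have hc := one_sub_q_ne (show (0 : ℤ) < (b : ℤ) + 1 by positivity)
  field_simp [Dp_ne b, hc]
lemma combo {n : ℤ} (k : ℤ) (hn : 2 ≤ n) :
    qb q n k - qb q (n - 2) (k - 1)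
      = q ^ (n - k) * qb q (n - 1) (k - 1) + q ^ k * qb q (n - 2) k := by
  have p1 := pascal1 (n := n) k (by omega)
  have p2 := pascal2 (n := n - 1) k (by omega)
  rw [show n - 1 - 1 = n - 2 by ring] at p2
  linear_combination p1 + p2

noncomputable def Gt (M : ℕ) (j : ℤ) : RatFunc ℚ :=
  (-1 : RatFunc ℚ) ^ j * q ^ (j * (3 * j + 1) / 2 + (M : ℤ) - 2 * j) *
    qb q (2 * (M : ℤ) - 1 - j) ((M : ℤ) - 1 + j)

lemma Gt_low (M : ℕ) : Gt M (-(M : ℤ)) = 0 := by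
  rw [Gt, qb_zero (by omega), mul_zero]

lemma Gt_high (M : ℕ) {j : ℤ} (hM : 1 ≤ M) (hj : 2 * (M : ℤ) ≤ j) : Gt M j = 0 := by
  rw [Gt, qb_zero (by omega), mul_zero]

lemma pent_step (j : ℤ) :
    (j + 1) * (3 * (j + 1) + 1) / 2 = j * (3 * j + 1) / 2 + (3 * j + 2) := by
  obtain ⟨c, hc⟩ := Int.even_mul_succ_self j
  have h1 : j * (3 * j + 1) = j * (j + 1) + 2 * (j * j) := by ring
  have h2 : (j + 1) * (3 * (j + 1) + 1) = j * (3 * j + 1) + (6 * j + 4) := by ring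
  set A := j * (3 * j + 1) with hA
  set B := (j + 1) * (3 * (j + 1) + 1) with hB
  set C := j * (j + 1) with hC
  set D := j * j with hD
  omega

lemma local_id (L : ℕ) (j : ℤ) (hj : j ≤ 2 * (L : ℤ) + 2) :
    (-1 : RatFunc ℚ) ^ j * q ^ (j * (3 * j + 1) / 2) * qb q (2 * ((L : ℤ) + 1) - j) (((L : ℤ) + 1) + j)
      = (-1 : RatFunc ℚ) ^ j * q ^ (j * (3 * j + 1) / 2) * qb q (2 * (L : ℤ) - j) ((L : ℤ) + j)
        + (Gt (L + 1) j - Gt (L + 1) (j + 1)) := by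
  have hM : ((L + 1 : ℕ) : ℤ) = (L : ℤ) + 1 := by push_cast; ring
  rcases lt_or_ge (2 * (L : ℤ)) j with hbig | hle
  · -- j ∈ {2L+1, 2L+2} : every qb vanishes
    rw [Gt, Gt, hM, qb_zero (by omega), qb_zero (by omega), qb_zero (by omega),
      qb_zero (by omega)]
    ring
  · have hc := combo (n := 2 * ((L : ℤ) + 1) - j) ((L : ℤ) + 1 + j) (by omega)
    rw [show 2 * ((L : ℤ) + 1) - j - 2 = 2 * (L : ℤ) - j by ring,
      show (L : ℤ) + 1 + j - 1 = (L : ℤ) + j by ring,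
      show 2 * ((L : ℤ) + 1) - j - 1 = 2 * (L : ℤ) + 1 - j by ring,
      show 2 * ((L : ℤ) + 1) - j - ((L : ℤ) + 1 + j) = (L : ℤ) + 1 - 2 * j by ring] at hc
    rw [Gt, Gt, hM,
      show 2 * ((L : ℤ) + 1) - 1 - j = 2 * (L : ℤ) + 1 - j by ring,
      show (L : ℤ) + 1 - 1 + j = (L : ℤ) + j by ring,
      show 2 * ((L : ℤ) + 1) - 1 - (j + 1) = 2 * (L : ℤ) - j by ring,
      show (L : ℤ) + 1 - 1 + (j + 1) = (L : ℤ) + 1 + j by ring]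
    have hs : (-1 : RatFunc ℚ) ^ (j + 1) = (-1 : RatFunc ℚ) ^ j * (-1) :=
      zpow_add_one₀ (by norm_num) j
    have hq1 : q ^ (j * (3 * j + 1) / 2 + ((L : ℤ) + 1) - 2 * j)
        = q ^ (j * (3 * j + 1) / 2) * q ^ ((L : ℤ) + 1 - 2 * j) := by
      rw [show j * (3 * j + 1) / 2 + ((L : ℤ) + 1) - 2 * j
          = j * (3 * j + 1) / 2 + ((L : ℤ) + 1 - 2 * j) by ring,
        zpow_add₀ q_ne_zero]
    have hq2 : q ^ ((j + 1) * (3 * (j + 1) + 1) / 2 + ((L : ℤ) + 1) - 2 * (j + 1))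
        = q ^ (j * (3 * j + 1) / 2) * q ^ ((L : ℤ) + 1 + j) := by
      rw [show (j + 1) * (3 * (j + 1) + 1) / 2 + ((L : ℤ) + 1) - 2 * (j + 1)
          = j * (3 * j + 1) / 2 + (3 * j + 2) + ((L : ℤ) + 1) - 2 * (j + 1) by
            rw [pent_step],
        show j * (3 * j + 1) / 2 + (3 * j + 2) + ((L : ℤ) + 1) - 2 * (j + 1)
          = j * (3 * j + 1) / 2 + ((L : ℤ) + 1 + j) by ring,
        zpow_add₀ q_ne_zero]
    rw [hs, hq1, hq2]
    linear_combination ((-1 : RatFunc ℚ) ^ j * q ^ (j * (3 * j + 1) / 2)) * hc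

lemma tele (H : ℤ → RatFunc ℚ) (a : ℤ) (n : ℕ) :
    ∑ j ∈ Finset.Icc a (a + (n : ℤ)), (H j - H (j + 1)) = H a - H (a + (n : ℤ) + 1) := by
  induction n with
  | zero => simp
  | succ n ih =>
    have hins : Finset.Icc a (a + ((n + 1 : ℕ) : ℤ))
        = insert (a + (n : ℤ) + 1) (Finset.Icc a (a + (n : ℤ))) := by
      ext x
      simp only [Finset.mem_Icc, Finset.mem_insert]
      push_cast
      omega
    rw [hins, Finset.sum_insert (by simp only [Finset.mem_Icc]; omega), ih,
      show a + ((n + 1 : ℕ) : ℤ) + 1 = a + (n : ℤ) + 1 + 1 by push_cast; ring]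
    ring


/-- Finite version of Euler's pentagonal number theorem (Berkovich–Garvan, Warnaar). -/
theorem stmt_0 (L : ℕ) :
    ∑ j ∈ Finset.Icc (-(L : ℤ)) (2 * L),
      (-1 : RatFunc ℚ) ^ j * q ^ (j * (3 * j + 1) / 2) * qb q (2 * L - j) (L + j) = 1 := by
  induction L with
  | zero =>
    norm_num [qb_zero_right]
  | succ L ih =>
    push_cast
    have hsub : Finset.Icc (-(L : ℤ)) (2 * (L : ℤ)) ⊆
        Finset.Icc (-((L : ℤ) + 1)) (2 * ((L : ℤ) + 1)) :=
      Finset.Icc_subset_Icc (by omega) (by omega)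
    have h1 : ∑ j ∈ Finset.Icc (-((L : ℤ) + 1)) (2 * ((L : ℤ) + 1)),
        (-1 : RatFunc ℚ) ^ j * q ^ (j * (3 * j + 1) / 2) * qb q (2 * (L : ℤ) - j) ((L : ℤ) + j) = 1 := by
      rw [← Finset.sum_subset hsub ?hv]
      · exact ih
      case hv =>
        intro x hx hx'
        simp only [Finset.mem_Icc] at hx hx'
        rw [qb_zero (by omega), mul_zero]
    have h2 : ∑ j ∈ Finset.Icc (-((L : ℤ) + 1)) (2 * ((L : ℤ) + 1)),
        (Gt (L + 1) j - Gt (L + 1) (j + 1)) = 0 := by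
      have ht := tele (Gt (L + 1)) (-((L : ℤ) + 1)) (3 * L + 3)
      rw [show -((L : ℤ) + 1) + ((3 * L + 3 : ℕ) : ℤ) = 2 * ((L : ℤ) + 1) by push_cast; ring] at ht
      rw [ht, show -((L : ℤ) + 1) = -(((L + 1 : ℕ)) : ℤ) by push_cast; ring, Gt_low,
        Gt_high (L + 1) (by omega) (by push_cast; omega)]
      ring
    calc ∑ j ∈ Finset.Icc (-((L : ℤ) + 1)) (2 * ((L : ℤ) + 1)),
          (-1 : RatFunc ℚ) ^ j * q ^ (j * (3 * j + 1) / 2) * qb q (2 * ((L : ℤ) + 1) - j) (((L : ℤ) + 1) + j)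
        = ∑ j ∈ Finset.Icc (-((L : ℤ) + 1)) (2 * ((L : ℤ) + 1)),
            ((-1 : RatFunc ℚ) ^ j * q ^ (j * (3 * j + 1) / 2) * qb q (2 * (L : ℤ) - j) ((L : ℤ) + j)
              + (Gt (L + 1) j - Gt (L + 1) (j + 1))) := by
          apply Finset.sum_congr rfl
          intro j hjm
          simp only [Finset.mem_Icc] at hjm
          exact local_id L j (by omega)
      _ = 1 := by
          rw [Finset.sum_add_distrib, h1, h2, add_zero]
end

section
/- For all natural numbers n and k, Σ_{j=0}^{n} [n choose j]_q (-1)^j q^{kj} = (q;q)_n · Σ_{j+2ℓ=n, j,ℓ≥0} q^{binom(j,2)} [k choose j]_q / (q^2;q^2)_ℓ, where (q;q)_n = Π_{i=1}^n (1-q^i) and (q^2;q^2)_ℓ = Π_{i=1}^ℓ (1-q^{2i}). -/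
open Finset

namespace Stmt13

lemma q_pow_ne_one {m : ℕ} (hm : m ≠ 0) : q ^ m ≠ 1 := by
  intro h
  have h2 : (algebraMap (Polynomial ℚ) (RatFunc ℚ)) (Polynomial.X ^ m)
      = (algebraMap (Polynomial ℚ) (RatFunc ℚ)) 1 := by
    simpa [q, RatFunc.algebraMap_X, map_pow] using h
  have h3 := RatFunc.algebraMap_injective ℚ h2
  have := congrArg Polynomial.natDegree h3
  simp [Polynomial.natDegree_X_pow] at this
  exact hm this

lemma one_sub_q_pow_ne_zero {m : ℕ} (hm : m ≠ 0) : (1 : RatFunc ℚ) - q ^ m ≠ 0 :=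
  sub_ne_zero_of_ne (q_pow_ne_one hm).symm

noncomputable def Nn (n j : ℕ) : RatFunc ℚ := ∏ i ∈ range j, (1 - q ^ (n - i))
noncomputable def Dd (j : ℕ) : RatFunc ℚ := ∏ i ∈ range j, (1 - q ^ (i + 1))
noncomputable def P2 (l : ℕ) : RatFunc ℚ := ∏ i ∈ range l, (1 - q ^ (2 * (i + 1)))

lemma Dd_ne (j : ℕ) : Dd j ≠ 0 := by
  unfold Dd
  rw [Finset.prod_ne_zero_iff]
  exact fun i _ => one_sub_q_pow_ne_zero (by omega)

lemma P2_ne (l : ℕ) : P2 l ≠ 0 := by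
  unfold P2
  rw [Finset.prod_ne_zero_iff]
  exact fun i _ => one_sub_q_pow_ne_zero (by omega)

lemma qb_eq {n j : ℕ} (h : j ≤ n) : qb q n j = Nn n j / Dd j := by
  unfold qb Nn Dd
  rw [if_pos ⟨Int.natCast_nonneg j, by exact_mod_cast h⟩]
  simp only [Int.toNat_natCast]
  have h1 : (∏ i ∈ range j, ((1:RatFunc ℚ) - q ^ ((n:ℤ) - (i : ℤ))))
      = ∏ i ∈ range j, ((1:RatFunc ℚ) - q ^ (n - i)) := by
    refine prod_congr rfl fun i hi => ?_
    rw [mem_range] at hi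
    rw [show ((n : ℤ) - i) = ((n - i : ℕ) : ℤ) by omega, zpow_natCast]
  have h2 : (∏ i ∈ range j, ((1:RatFunc ℚ) - q ^ ((i : ℤ) + 1)))
      = ∏ i ∈ range j, ((1:RatFunc ℚ) - q ^ (i + 1)) := by
    refine prod_congr rfl fun i _ => ?_
    rw [show ((i : ℤ) + 1) = ((i + 1 : ℕ) : ℤ) by omega, zpow_natCast]
  rw [h1, h2]

lemma qb_big {n j : ℕ} (h : n < j) : qb q n j = 0 := by
  unfold qb; rw [if_neg (by omega)]

lemma qb_neg {n j : ℤ} (h : j < 0) : qb q n j = 0 := by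
  unfold qb; rw [if_neg (by omega)]

lemma qb_zero (n : ℕ) : qb q n ((0:ℕ):ℤ) = 1 := by
  unfold qb; rw [if_pos ⟨le_refl _, by omega⟩]; simp

lemma qb_self (n : ℕ) : qb q n n = 1 := by
  rw [qb_eq (le_refl n), div_eq_one_iff_eq (Dd_ne n)]
  unfold Nn Dd
  rw [← prod_range_reflect (fun i => (1 : RatFunc ℚ) - q ^ (i + 1)) n]
  exact prod_congr rfl fun i hi => by
    rw [mem_range] at hi; congr 2; omega

-- part2

lemma tri (j : ℕ) : (j + 1) * j / 2 = j * (j - 1) / 2 + j := by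
  induction j with
  | zero => rfl
  | succ s ih =>
    rw [Nat.add_sub_cancel]
    rw [show (s + 1 + 1) * (s + 1) = (s + 1) * s + 2 * (s + 1) by ring,
      Nat.add_mul_div_left _ _ (by norm_num)]

lemma pascal1 (n j : ℕ) :
    qb q (↑(n + 1)) ↑j = qb q ↑n ↑j + q ^ (n + 1 - j) * qb q ↑n ((j : ℤ) - 1) := by
  rcases Nat.eq_zero_or_pos j with rfl | hj
  · rw [qb_zero, qb_zero, qb_neg (by norm_num : ((0:ℕ):ℤ) - 1 < 0)]
    ring
  obtain ⟨m, rfl⟩ : ∃ m, j = m + 1 := ⟨j - 1, by omega⟩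
  have hc : ((m + 1 : ℕ) : ℤ) - 1 = ((m : ℕ) : ℤ) := by push_cast; ring
  rw [hc]
  rcases lt_or_ge n m with h | h
  · rw [qb_big (by omega), qb_big (by omega), qb_big h]; ring
  rcases eq_or_lt_of_le h with rfl | hlt
  · rw [qb_self, qb_big (by omega), qb_self, show m + 1 - (m + 1) = 0 by omega]
    ring
  · have h1 : m + 1 ≤ n := hlt
    obtain ⟨c, rfl⟩ : ∃ c, n = m + 1 + c := ⟨n - m - 1, by omega⟩
    rw [qb_eq (show m + 1 ≤ m + 1 + c + 1 by omega), qb_eq (show m + 1 ≤ m + 1 + c by omega),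
      qb_eq (show m ≤ m + 1 + c by omega)]
    have e1 : Nn (m + 1 + c + 1) (m + 1) = Nn (m + 1 + c) m * (1 - q ^ (m + c + 2)) := by
      unfold Nn
      rw [prod_range_succ']
      congr 1
      · exact prod_congr rfl fun i hi => by congr 2; omega
      · congr 2; omega
    have e2 : Nn (m + 1 + c) (m + 1) = Nn (m + 1 + c) m * (1 - q ^ (c + 1)) := by
      unfold Nn
      rw [prod_range_succ]
      congr 3
      omega
    have e3 : Dd (m + 1) = Dd m * (1 - q ^ (m + 1)) := by
      unfold Dd; rw [prod_range_succ]
    rw [e1, e2, e3, show m + 1 + c + 1 - (m + 1) = c + 1 by omega]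
    have hD := Dd_ne m
    have h2 : (1 : RatFunc ℚ) - q ^ (m + 1) ≠ 0 := one_sub_q_pow_ne_zero (by omega)
    field_simp
    ring

lemma pascal2 (k m : ℕ) :
    qb q (↑(k + 1)) ↑m = q ^ m * qb q ↑k ↑m + qb q ↑k ((m : ℤ) - 1) := by
  rcases Nat.eq_zero_or_pos m with rfl | hm
  · rw [qb_zero, qb_zero, qb_neg (by norm_num : ((0:ℕ):ℤ) - 1 < 0)]
    ring
  obtain ⟨s, rfl⟩ : ∃ s, m = s + 1 := ⟨m - 1, by omega⟩
  have hc : ((s + 1 : ℕ) : ℤ) - 1 = ((s : ℕ) : ℤ) := by push_cast; ring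
  rw [hc]
  rcases lt_or_ge k s with h | h
  · rw [qb_big (by omega), qb_big (by omega), qb_big h]; ring
  rcases eq_or_lt_of_le h with rfl | hlt
  · rw [qb_self, qb_big (by omega), qb_self]; ring
  · obtain ⟨c, rfl⟩ : ∃ c, k = s + 1 + c := ⟨k - s - 1, by omega⟩
    rw [qb_eq (show s + 1 ≤ s + 1 + c + 1 by omega), qb_eq (show s + 1 ≤ s + 1 + c by omega),
      qb_eq (show s ≤ s + 1 + c by omega)]
    have e1 : Nn (s + 1 + c + 1) (s + 1) = Nn (s + 1 + c) s * (1 - q ^ (s + c + 2)) := by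
      unfold Nn
      rw [prod_range_succ']
      congr 1
      · exact prod_congr rfl fun i hi => by congr 2; omega
      · congr 2; omega
    have e2 : Nn (s + 1 + c) (s + 1) = Nn (s + 1 + c) s * (1 - q ^ (c + 1)) := by
      unfold Nn
      rw [prod_range_succ]
      congr 3
      omega
    have e3 : Dd (s + 1) = Dd s * (1 - q ^ (s + 1)) := by
      unfold Dd; rw [prod_range_succ]
    rw [e1, e2, e3]
    have hD := Dd_ne s
    have h2 : (1 : RatFunc ℚ) - q ^ (s + 1) ≠ 0 := one_sub_q_pow_ne_zero (by omega)
    field_simp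
    ring

lemma absorb (k m : ℕ) :
    (q ^ m - q ^ k) * qb q ↑k ↑m = q ^ m * ((1 - q ^ (m + 1)) * qb q ↑k ↑(m + 1)) := by
  rcases lt_or_ge k m with h | h
  · rw [qb_big h, qb_big (by omega)]; ring
  rcases eq_or_lt_of_le h with rfl | hlt
  · rw [qb_big (show m < m + 1 by omega)]; ring
  · obtain ⟨c, rfl⟩ : ∃ c, k = m + 1 + c := ⟨k - m - 1, by omega⟩
    rw [qb_eq (show m ≤ m + 1 + c by omega), qb_eq (show m + 1 ≤ m + 1 + c by omega)]
    have e2 : Nn (m + 1 + c) (m + 1) = Nn (m + 1 + c) m * (1 - q ^ (c + 1)) := by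
      unfold Nn
      rw [prod_range_succ]
      congr 3
      omega
    have e3 : Dd (m + 1) = Dd m * (1 - q ^ (m + 1)) := by
      unfold Dd; rw [prod_range_succ]
    rw [e2, e3]
    have hD := Dd_ne m
    have h2 : (1 : RatFunc ℚ) - q ^ (m + 1) ≠ 0 := one_sub_q_pow_ne_zero (by omega)
    field_simp
    ring

noncomputable def A (n k : ℕ) : RatFunc ℚ :=
  ∑ j ∈ range (n + 1), qb q ↑n ↑j * (-q ^ k) ^ (n - j)

noncomputable def F (n k : ℕ) : RatFunc ℚ :=
  ∑ l ∈ range (n / 2 + 1),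
    q ^ ((n - 2 * l) * (n - 2 * l - 1) / 2) * qb q ↑k (↑n - 2 * ↑l) / P2 l

lemma A_rec (n k : ℕ) : A (n + 1) k = A n (k + 1) - q ^ k * A n k := by
  unfold A
  have hp : ∀ j ∈ range (n + 1 + 1), qb q ↑(n + 1) ↑j * (-q ^ k) ^ (n + 1 - j)
      = qb q ↑n ↑j * (-q ^ k) ^ (n + 1 - j)
        + q ^ (n + 1 - j) * qb q ↑n ((j : ℤ) - 1) * (-q ^ k) ^ (n + 1 - j) := by
    intro j _
    rw [pascal1 n j]; ring
  rw [sum_congr rfl hp, sum_add_distrib]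
  have ha : ∑ j ∈ range (n + 1 + 1), qb q ↑n ↑j * (-q ^ k) ^ (n + 1 - j)
      = -(q ^ k * ∑ j ∈ range (n + 1), qb q ↑n ↑j * (-q ^ k) ^ (n - j)) := by
    rw [sum_range_succ, qb_big (show n < n + 1 by omega), zero_mul, add_zero, ← neg_mul,
      mul_sum]
    refine sum_congr rfl fun j hj => ?_
    rw [mem_range] at hj
    rw [show n + 1 - j = (n - j) + 1 by omega, pow_succ]
    ring
  have hb : ∑ j ∈ range (n + 1 + 1),
        q ^ (n + 1 - j) * qb q ↑n ((j : ℤ) - 1) * (-q ^ k) ^ (n + 1 - j)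
      = ∑ j ∈ range (n + 1), qb q ↑n ↑j * (-q ^ (k + 1)) ^ (n - j) := by
    rw [sum_range_succ']
    rw [show (((0:ℕ) : ℤ) - 1) = (-1 : ℤ) by norm_num, qb_neg (by norm_num), mul_zero,
      zero_mul, add_zero]
    refine sum_congr rfl fun j hj => ?_
    rw [mem_range] at hj
    rw [show ((((j + 1) : ℕ) : ℤ) - 1) = ((j : ℕ) : ℤ) by push_cast; ring,
      show n + 1 - (j + 1) = n - j by omega,
      show (-q ^ (k + 1) : RatFunc ℚ) = (-q ^ k) * q by rw [pow_succ]; ring, mul_pow]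
    ring
  rw [ha, hb]
  ring

lemma F_rec (n k : ℕ) :
    (1 - q ^ (n + 1)) * F (n + 1) k = F n (k + 1) - q ^ k * F n k := by
  have step1 : F n (k + 1) - q ^ k * F n k
      = (∑ l ∈ range (n / 2 + 1),
          q ^ ((n + 1 - 2 * l) * (n + 1 - 2 * l - 1) / 2)
            * ((1 - q ^ (n + 1 - 2 * l)) * qb q ↑k (↑(n + 1) - 2 * ↑l)) / P2 l)
        + ∑ l ∈ range (n / 2 + 1),
            q ^ ((n - 2 * l) * (n - 2 * l - 1) / 2) * qb q ↑k ((↑n - 2 * ↑l) - 1) / P2 l := by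
    unfold F
    rw [mul_sum, ← sum_sub_distrib, ← sum_add_distrib]
    refine sum_congr rfl fun l hl => ?_
    rw [mem_range] at hl
    obtain ⟨m, hm⟩ : ∃ m, n = 2 * l + m := ⟨n - 2 * l, by omega⟩
    subst hm
    rw [show 2 * l + m - 2 * l = m from by omega,
      show 2 * l + m + 1 - 2 * l = m + 1 from by omega,
      show ((2 * l + m : ℕ) : ℤ) - 2 * (l : ℤ) = ((m : ℕ) : ℤ) from by push_cast; ring,
      show ((2 * l + m + 1 : ℕ) : ℤ) - 2 * (l : ℤ) = ((m + 1 : ℕ) : ℤ) from by push_cast; ring,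
      show (m + 1) * (m + 1 - 1) / 2 = m * (m - 1) / 2 + m from by
        rw [Nat.add_sub_cancel]; exact tri m]
    linear_combination (q ^ (m * (m - 1) / 2) / P2 l) * pascal2 k m
      + (q ^ (m * (m - 1) / 2) / P2 l) * absorb k m
  have step2 : (1 - q ^ (n + 1)) * F (n + 1) k
      = (∑ l ∈ range ((n + 1) / 2 + 1),
          q ^ ((n + 1 - 2 * l) * (n + 1 - 2 * l - 1) / 2)
            * ((1 - q ^ (n + 1 - 2 * l)) * qb q ↑k (↑(n + 1) - 2 * ↑l)) / P2 l)
        + ∑ l ∈ range ((n + 1) / 2 + 1),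
            q ^ ((n + 1 - 2 * l) * (n + 1 - 2 * l - 1) / 2 + (n + 1 - 2 * l))
              * ((1 - q ^ (2 * l)) * qb q ↑k (↑(n + 1) - 2 * ↑l)) / P2 l := by
    unfold F
    rw [mul_sum, ← sum_add_distrib]
    refine sum_congr rfl fun l hl => ?_
    rw [mem_range] at hl
    obtain ⟨d, hd⟩ : ∃ d, n + 1 - 2 * l = d := ⟨n + 1 - 2 * l, rfl⟩
    rw [hd, show n + 1 = d + 2 * l from by omega]
    have hP := P2_ne l
    field_simp
    ring
  have claim : ∀ l ∈ range ((n + 1) / 2),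
      q ^ ((n + 1 - 2 * (l + 1)) * (n + 1 - 2 * (l + 1) - 1) / 2 + (n + 1 - 2 * (l + 1)))
          * ((1 - q ^ (2 * (l + 1))) * qb q ↑k (↑(n + 1) - 2 * ↑(l + 1))) / P2 (l + 1)
        = q ^ ((n - 2 * l) * (n - 2 * l - 1) / 2) * qb q ↑k ((↑n - 2 * ↑l) - 1) / P2 l := by
    intro l hl
    rw [mem_range] at hl
    have h2l : 2 * l + 1 ≤ n := by omega
    obtain ⟨j, hj⟩ : ∃ j, n = 2 * l + 1 + j := ⟨n - 2 * l - 1, by omega⟩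
    subst hj
    rw [show 2 * l + 1 + j + 1 - 2 * (l + 1) = j from by omega,
      show 2 * l + 1 + j - 2 * l - 1 = j from by omega,
      show 2 * l + 1 + j - 2 * l = j + 1 from by omega,
      show ((2 * l + 1 + j + 1 : ℕ) : ℤ) - 2 * ((l + 1 : ℕ) : ℤ) = ((j : ℕ) : ℤ) from by
        push_cast; ring,
      show ((2 * l + 1 + j : ℕ) : ℤ) - 2 * (l : ℤ) - 1 = ((j : ℕ) : ℤ) from by push_cast; ring,
      show (j + 1) * j / 2 = j * (j - 1) / 2 + j from tri j,
      show P2 (l + 1) = P2 l * (1 - q ^ (2 * (l + 1))) from prod_range_succ _ _]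
    have hP := P2_ne l
    have hc : (1 : RatFunc ℚ) - q ^ (2 * (l + 1)) ≠ 0 := one_sub_q_pow_ne_zero (by omega)
    field_simp
  have step4 : (∑ l ∈ range ((n + 1) / 2 + 1),
        q ^ ((n + 1 - 2 * l) * (n + 1 - 2 * l - 1) / 2 + (n + 1 - 2 * l))
          * ((1 - q ^ (2 * l)) * qb q ↑k (↑(n + 1) - 2 * ↑l)) / P2 l)
      = ∑ l ∈ range (n / 2 + 1),
          q ^ ((n - 2 * l) * (n - 2 * l - 1) / 2) * qb q ↑k ((↑n - 2 * ↑l) - 1) / P2 l := by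
    rw [sum_range_succ']
    rw [show (2 * 0 : ℕ) = 0 from rfl, pow_zero, sub_self, zero_mul, mul_zero, zero_div,
      add_zero]
    obtain ⟨a, ha | ha⟩ := Nat.even_or_odd' n
    · rw [show n / 2 + 1 = (n + 1) / 2 + 1 from by omega, sum_range_succ,
        qb_neg (show ((n : ℤ) - 2 * ((n + 1) / 2 : ℕ)) - 1 < 0 from by omega), mul_zero,
        zero_div, add_zero]
      exact sum_congr rfl claim
    · rw [show (n + 1) / 2 = n / 2 + 1 from by omega] at claim ⊢
      exact sum_congr rfl claim
  have step3 : (∑ l ∈ range ((n + 1) / 2 + 1),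
        q ^ ((n + 1 - 2 * l) * (n + 1 - 2 * l - 1) / 2)
          * ((1 - q ^ (n + 1 - 2 * l)) * qb q ↑k (↑(n + 1) - 2 * ↑l)) / P2 l)
      = ∑ l ∈ range (n / 2 + 1),
          q ^ ((n + 1 - 2 * l) * (n + 1 - 2 * l - 1) / 2)
            * ((1 - q ^ (n + 1 - 2 * l)) * qb q ↑k (↑(n + 1) - 2 * ↑l)) / P2 l := by
    obtain ⟨a, ha | ha⟩ := Nat.even_or_odd' n
    · rw [show (n + 1) / 2 = n / 2 from by omega]
    · rw [show (n + 1) / 2 + 1 = (n / 2 + 1) + 1 from by omega, sum_range_succ,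
        show n + 1 - 2 * (n / 2 + 1) = 0 from by omega, pow_zero, sub_self, zero_mul,
        mul_zero, zero_div, add_zero]
  rw [step2, step1, step3, step4]

lemma key : ∀ n k : ℕ, A n k = Dd n * F n k := by
  intro n
  induction n with
  | zero =>
    intro k
    unfold A F Dd P2
    have h0 : ∀ m : ℕ, qb q (m : ℤ) (0 : ℤ) = 1 := fun m => by simpa using qb_zero m
    simp [h0, show qb q (0:ℤ) (0:ℤ) = 1 from by simpa using qb_zero 0]
  | succ n ih =>
    intro k
    rw [A_rec, ih, ih, show Dd (n + 1) = Dd n * (1 - q ^ (n + 1)) from prod_range_succ _ _,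
      mul_assoc, F_rec]
    ring

end Stmt13

/-- Formula (2.6): `Σ_{j=0}^n [n choose j]_q (-q^k)^(n-j)
= (q;q)_n Σ_{j+2ℓ=n} q^(binom(j,2)) [k choose j]_q / (q²;q²)_ℓ`. -/
theorem stmt_13 (n k : ℕ) :
    ∑ j ∈ Finset.range (n + 1), qb q n j * (-q ^ k) ^ (n - j)
      = (∏ i ∈ Finset.range n, (1 - q ^ (i + 1)))
        * ∑ l ∈ Finset.range (n / 2 + 1),
            q ^ ((n - 2 * l) * (n - 2 * l - 1) / 2) * qb q k (n - 2 * l)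
              / ∏ i ∈ Finset.range l, (1 - q ^ (2 * (i + 1))) := by
  have h := Stmt13.key n k
  unfold Stmt13.A Stmt13.F Stmt13.Dd Stmt13.P2 at h
  exact h
end

section
/- The Rogers–Szegő polynomials r_n(x,a) = Σ_k [n choose k]_q x^k a^{n-k} satisfy the three-term relation r_n(q^2 x, a) - (1 - qx/a) r_n(qx, a) - q^{n+1} (x/a) r_n(x,a) = 0 for all n ≥ 0 (as an identity of rational functions in q, x, a with a ≠ 0); equivalently, a·r_n(q^2 x,a) - (a - qx) r_n(qx,a) - q^{n+1} x r_n(x,a) = 0 as a polynomial identity. -/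
open Finset

/-- Rogers–Szegő polynomial `r_n(x,a) = Σ_k [n choose k]_q x^k a^(n-k)`. -/
noncomputable def r (n : ℕ) (x a : RatFunc ℚ) : RatFunc ℚ :=
  ∑ k ∈ Finset.range (n + 1), qb q n k * x ^ k * a ^ (n - k)

lemma q_pow_ne_one (m : ℕ) (hm : m ≠ 0) : (q : RatFunc ℚ) ^ m ≠ 1 := by
  intro h
  have h2 : (algebraMap (Polynomial ℚ) (RatFunc ℚ)) (Polynomial.X ^ m) =
      (algebraMap (Polynomial ℚ) (RatFunc ℚ)) 1 := by
    simpa [q, map_pow, RatFunc.algebraMap_X] using h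
  have h3 := RatFunc.algebraMap_injective ℚ h2
  have := congrArg Polynomial.natDegree h3
  simp [Polynomial.natDegree_X_pow] at this
  exact hm this

lemma one_sub_q_zpow_ne (m : ℤ) (hm : 1 ≤ m) : (1 : RatFunc ℚ) - q ^ m ≠ 0 := by
  have : q ^ m = q ^ m.toNat := by
    rw [← zpow_natCast]; congr 1; omega
  rw [this, sub_ne_zero]
  exact fun h => q_pow_ne_one m.toNat (by omega) h.symm

lemma myDivHelper (P Q c d : RatFunc ℚ) (hd : d ≠ 0) (hQ : Q ≠ 0) :
    (P * c) / (Q * d) * d = P / Q * c := by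
  field_simp

lemma qb_rec (n k : ℤ) (h1 : 1 ≤ k) (h2 : k ≤ n) :
    qb q n k * (1 - q ^ k) = qb q n (k-1) * (1 - q ^ (n - k + 1)) := by
  have hk0 : (0:ℤ) ≤ k := by omega
  rw [qb, qb, if_pos ⟨hk0, h2⟩, if_pos ⟨by omega, by omega⟩]
  have htn : k.toNat = (k-1).toNat + 1 := by omega
  rw [htn, Finset.prod_range_succ, Finset.prod_range_succ]
  have e1 : n - ((k-1).toNat : ℤ) = n - k + 1 := by omega
  have e2 : ((k-1).toNat : ℤ) + 1 = k := by omega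
  rw [e1, e2]
  have hd1 : (1 : RatFunc ℚ) - q ^ k ≠ 0 := one_sub_q_zpow_ne k h1
  have hd2 : (∏ i ∈ Finset.range (k-1).toNat, ((1:RatFunc ℚ) - q ^ ((i : ℤ) + 1))) ≠ 0 := by
    apply Finset.prod_ne_zero_iff.mpr
    intro i _
    exact one_sub_q_zpow_ne _ (by omega)
  exact myDivHelper _ _ _ _ hd1 hd2

lemma coeff_zero (n k : ℕ) (hk : k ≤ n + 1) :
    qb q n k * (q ^ (2*k) - q ^ k) + qb q n ((k:ℤ)-1) * ((q:RatFunc ℚ) ^ k - q ^ (n+1)) = 0 := by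
  rcases Nat.eq_zero_or_pos k with h0 | hpos
  · subst h0
    have h1 : qb q n (-1) = 0 := by rw [qb, if_neg]; omega
    simp [h1]
  rcases Nat.lt_or_ge n k with hbig | hle
  · -- k = n + 1
    have hk1 : k = n + 1 := by omega
    subst hk1
    have : qb q n ((n:ℕ)+1 : ℤ) = 0 := by rw [qb, if_neg]; omega
    simp only [Nat.cast_add, Nat.cast_one] at this ⊢
    rw [this]
    simp
  · -- 1 ≤ k ≤ n
    have h := qb_rec n k (by exact_mod_cast hpos) (by exact_mod_cast hle)
    have hz1 : (q : RatFunc ℚ) ^ (k:ℤ) = q ^ k := zpow_natCast q k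
    have hz2 : (q : RatFunc ℚ) ^ ((n:ℤ) - k + 1) = q ^ (n + 1 - k) := by
      rw [← zpow_natCast]; congr 1; omega
    rw [hz1, hz2] at h
    have hpow : (q : RatFunc ℚ) ^ k * q ^ (n + 1 - k) = q ^ (n+1) := by
      rw [← pow_add]; congr 1; omega
    have hpow2 : (q : RatFunc ℚ) ^ (2*k) = q ^ k * q ^ k := by
      rw [← pow_add]; congr 1; omega
    linear_combination (-(q^k : RatFunc ℚ)) * h + qb q n ((k:ℤ)-1) * hpow +
      qb q n (k:ℤ) * hpow2

/-- Three-term relation (2.7), in polynomial form: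
`a r_n(q²x,a) - (a - qx) r_n(qx,a) - q^(n+1) x r_n(x,a) = 0`. -/
theorem stmt_14 (n : ℕ) (x a : RatFunc ℚ) :
    a * r n (q ^ 2 * x) a - (a - q * x) * r n (q * x) a - q ^ (n + 1) * x * r n x a = 0 := by
  have hqbtop : qb q n ((n:ℤ)+1) = 0 := by rw [qb, if_neg]; omega
  have hqbneg : qb q n (-1) = 0 := by rw [qb, if_neg]; omega
  have S1 : a * r n (q ^ 2 * x) a =
      ∑ k ∈ range (n+2), qb q n k * q^(2*k) * x^k * a^(n+1-k) := by
    rw [r, Finset.mul_sum, Finset.sum_range_succ (n := n+1)]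
    push_cast [hqbtop]
    rw [zero_mul, zero_mul, zero_mul, add_zero]
    apply Finset.sum_congr rfl
    intro k hk
    have hk' : k ≤ n := by simpa [Nat.lt_succ_iff] using hk
    have ha : a^(n+1-k) = a^(n-k) * a := by rw [← pow_succ]; congr 1; omega
    rw [ha, mul_pow, ← pow_mul]
    ring
  have S2 : a * r n (q * x) a =
      ∑ k ∈ range (n+2), qb q n k * q^k * x^k * a^(n+1-k) := by
    rw [r, Finset.mul_sum, Finset.sum_range_succ (n := n+1)]
    push_cast [hqbtop]
    rw [zero_mul, zero_mul, zero_mul, add_zero]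
    apply Finset.sum_congr rfl
    intro k hk
    have hk' : k ≤ n := by simpa [Nat.lt_succ_iff] using hk
    have ha : a^(n+1-k) = a^(n-k) * a := by rw [← pow_succ]; congr 1; omega
    rw [ha, mul_pow]
    ring
  have S3 : q * x * r n (q * x) a =
      ∑ k ∈ range (n+2), qb q n ((k:ℤ)-1) * q^k * x^k * a^(n+1-k) := by
    rw [r, Finset.mul_sum, Finset.sum_range_succ' _ (n+1)]
    push_cast [hqbneg, add_sub_cancel_right]
    rw [zero_mul, zero_mul, zero_mul, add_zero]
    apply Finset.sum_congr rfl
    intro k hk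
    have hs : (n:ℕ) + 1 - (k+1) = n - k := by omega
    rw [mul_pow]
    ring
  have S4 : q ^ (n+1) * x * r n x a =
      ∑ k ∈ range (n+2), qb q n ((k:ℤ)-1) * q^(n+1) * x^k * a^(n+1-k) := by
    rw [r, Finset.mul_sum, Finset.sum_range_succ' _ (n+1)]
    push_cast [hqbneg, add_sub_cancel_right]
    rw [zero_mul, zero_mul, zero_mul, add_zero]
    apply Finset.sum_congr rfl
    intro k hk
    have hs : (n:ℕ) + 1 - (k+1) = n - k := by omega
    ring
  rw [sub_mul, S1, S2, S3, S4]
  rw [← Finset.sum_sub_distrib, ← Finset.sum_sub_distrib, ← Finset.sum_sub_distrib]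
  apply Finset.sum_eq_zero
  intro k hk
  have hk' : k ≤ n + 1 := by simpa [Nat.lt_succ_iff] using hk
  linear_combination (x^k * a^(n+1-k)) * coeff_zero n k hk'
end
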